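/- Let Δ be the simplex category of nonempty finite linearly ordered sets and order-preserving maps, and let Δ_inj ⊆ Δ be the wide subcategory with the same objects but only injective order-preserving maps. Then the inclusion functor Δ_inj → Δ is initial (cofinal for limits): for any cosimplicial object X: Δ → D in a category D, the limit of X over Δ exists if and only if the limit of the restriction of X to Δ_inj exists, and in that case they agree. -/

import Mathlib

/-!
In the comma category `Δ_inj / [n]`, any object `(i, f)` receives a map from a vertex
`([0], f ∘ v)` of `i`, and this vertex also maps to `([n], 𝟙)`, because every map out of `[0]`
is injective. So all objects are zigzag-connected to `([n], 𝟙)`. Only two facts about `[0]` enter: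
it maps to every object, and the wide subcategory contains every map out of it.
-/

open CategoryTheory Limits MorphismProperty

universe v u

/-- The inclusion `Δ_inj → Δ` of the wide subcategory of the simplex category with the
same objects but only the injective order-preserving maps (the monomorphisms). -/
noncomputable def simplexInjInclusion :
    WideSubcategory (monomorphisms SimplexCategory) ⥤ SimplexCategory :=
  wideSubcategoryInclusion (monomorphisms SimplexCategory)

theorem CategoryTheory.wideSubcategoryInclusion_initial_of_forall_hom_from
    {C : Type*} [Category C] (W : MorphismProperty C) [W.IsMultiplicative] (p : C)
    (hW : ∀ {X : C} (f : p ⟶ X), W f) (hp : ∀ X : C, Nonempty (p ⟶ X)) :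
    (wideSubcategoryInclusion W).Initial := by
  refine ⟨fun c => ?_⟩
  let top : CostructuredArrow (wideSubcategoryInclusion W) c := .mk
    (𝟙 ((wideSubcategoryInclusion W).obj ⟨c⟩))
  have zigzag_top (j : CostructuredArrow (wideSubcategoryInclusion W) c) : Zigzag j top := by
    obtain ⟨g⟩ := hp j.left.obj
    let vertex : CostructuredArrow (wideSubcategoryInclusion W) c := .mk (Y := ⟨p⟩) (g ≫ j.hom)
    let toJ : vertex ⟶ j := CostructuredArrow.homMk ⟨g, hW g⟩ rfl
    let toTop : vertex ⟶ top := CostructuredArrow.homMk ⟨g ≫ j.hom, hW _⟩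
      (Category.comp_id _)
    exact Zigzag.of_inv_hom toJ toTop
  have : Nonempty (CostructuredArrow (wideSubcategoryInclusion W) c) := ⟨top⟩
  exact zigzag_isConnected fun j₁ j₂ => (zigzag_top j₁).trans (zigzag_top j₂).symm

theorem SimplexCategory.mono_of_mk_zero {m : SimplexCategory}
    (f : SimplexCategory.mk 0 ⟶ m) : Mono f :=
  SimplexCategory.mono_iff_injective.mpr fun _ _ _ => Subsingleton.elim (α := Fin 1) _ _

instance simplexInjInclusion_initial : simplexInjInclusion.Initial :=
  wideSubcategoryInclusion_initial_of_forall_hom_from _ (SimplexCategory.mk 0)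
    SimplexCategory.mono_of_mk_zero fun m => ⟨SimplexCategory.const _ m 0⟩

/-- The inclusion `Δ_inj ⊆ Δ` of the subcategory of injective order-preserving maps
into the simplex category is initial: for any cosimplicial object `X : Δ ⥤ D`, the
limit of `X` over `Δ` exists if and only if the limit of the restriction of `X` to
`Δ_inj` exists, and in that case they agree. -/
theorem statement15 :
    (simplexInjInclusion.Initial) ∧
    (∀ (D : Type u) [Category.{v} D] (X : SimplexCategory ⥤ D),
      HasLimit (simplexInjInclusion ⋙ X) ↔ HasLimit X) ∧
    (∀ (D : Type u) [Category.{v} D] (X : SimplexCategory ⥤ D)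
      [HasLimit X] [HasLimit (simplexInjInclusion ⋙ X)],
      Nonempty (limit (simplexInjInclusion ⋙ X) ≅ limit X)) :=
  ⟨inferInstance,
    fun _ _ _ => ⟨fun _ => Functor.Initial.hasLimit_of_comp simplexInjInclusion,
      fun _ => inferInstance⟩,
    fun _ _ X _ _ => ⟨Functor.Initial.limitIso simplexInjInclusion X⟩⟩
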